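/- arXiv:2110.00870 — 4 statements merged into one kernel-verified Lean document; each statement's English description precedes it below -/
import Mathlib

section
/- Let A, A' be abelian groups (or commutative group schemes with endomorphism ring ℤ viewed abstractly) on which a group G acts, and suppose φ : A' → A is an isogeny with dual φ* : A → A' satisfying φ* ∘ φ = [d] for a natural number d > 0. Assume End(A') ⊗ ℚ ≅ ℚ. Then the map σ ↦ c_σ := (1/d)·(φ^σ ∘ φ*) ∈ ℚ* defines a 1-cocycle on G with values in ℚ*, i.e., c_{στ} = c_σ^τ · c_τ for all σ, τ ∈ G; since G acts trivially on ℚ*, it is a homomorphism G → ℚ*. -/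
/-- The Galois conjugate `φ^σ` of a linear map `φ : A' → A`, for actions `α, α'` of `G`
on `A` and `A'`. -/
noncomputable def galoisConj {G A A' : Type*} [Group G]
    [AddCommGroup A] [Module ℚ A] [AddCommGroup A'] [Module ℚ A']
    (α : G →* (A ≃ₗ[ℚ] A)) (α' : G →* (A' ≃ₗ[ℚ] A'))
    (σ : G) (φ : A' →ₗ[ℚ] A) : A' →ₗ[ℚ] A :=
  (α σ).toLinearMap ∘ₗ φ ∘ₗ (α' σ⁻¹).toLinearMap

/-- Let `φ : A' → A` be an isogeny with dual `φ* : A → A'`, `φ* ∘ φ = [d]` and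
`φ ∘ φ* = [d]` with `d > 0`, where `End(A') ⊗ ℚ ≅ ℚ` so that `(1/d)·(φ^σ ∘ φ*)` is a
scalar `c σ ∈ ℚ`.  Then `σ ↦ c_σ` is a 1-cocycle for the trivial action of `G` on `ℚ*`,
i.e. a homomorphism: `c (στ) = c σ · c τ`. -/
theorem isogeny_cocycle_is_hom
    {G A A' : Type*} [Group G]
    [AddCommGroup A] [Module ℚ A] [Nontrivial A]
    [AddCommGroup A'] [Module ℚ A']
    (α : G →* (A ≃ₗ[ℚ] A)) (α' : G →* (A' ≃ₗ[ℚ] A'))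
    (φ : A' →ₗ[ℚ] A) (φstar : A →ₗ[ℚ] A') (d : ℕ) (hd : 0 < d)
    (hdual : φstar ∘ₗ φ = (d : ℚ) • LinearMap.id)
    (hdual' : φ ∘ₗ φstar = (d : ℚ) • LinearMap.id)
    (c : G → ℚ)
    (hc : ∀ σ : G, galoisConj α α' σ φ ∘ₗ φstar = ((d : ℚ) * c σ) • LinearMap.id) :
    ∀ σ τ : G, c (σ * τ) = c σ * c τ := by
  intro σ τ
  have hd0 : (d : ℚ) ≠ 0 := by exact_mod_cast hd.ne'
  -- pointwise versions of the hypotheses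
  have hc' : ∀ (ρ : G) (x : A), α ρ (φ (α' ρ⁻¹ (φstar x))) = ((d : ℚ) * c ρ) • x := by
    intro ρ x
    have := congrArg (fun f : A →ₗ[ℚ] A => f x) (hc ρ)
    simpa [galoisConj] using this
  have hdual'' : ∀ y : A, φstar (φ (φstar y)) = (d : ℚ) • φstar y := by
    intro y
    have := congrArg (fun f : A' →ₗ[ℚ] A' => f (φstar y)) hdual
    simpa using this
  have hgrp : ∀ (ρ : G) (x : A), α ρ (α ρ⁻¹ x) = x := by
    intro ρ x
    calc α ρ (α ρ⁻¹ x) = (α ρ * α ρ⁻¹) x := rfl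
      _ = α (ρ * ρ⁻¹) x := by rw [← map_mul]
      _ = x := by rw [mul_inv_cancel, map_one]; rfl
  -- key: α' ρ⁻¹ (φ* x) = c ρ • φ* (α ρ⁻¹ x)
  have key : ∀ (ρ : G) (x : A), α' ρ⁻¹ (φstar x) = c ρ • φstar (α ρ⁻¹ x) := by
    intro ρ x
    have h1 : φ (α' ρ⁻¹ (φstar x)) = ((d : ℚ) * c ρ) • α ρ⁻¹ x := by
      have h0 := congrArg (α ρ⁻¹) (hc' ρ x)
      have h2 : α ρ⁻¹ (α ρ (φ (α' ρ⁻¹ (φstar x)))) = φ (α' ρ⁻¹ (φstar x)) := by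
        simpa using hgrp ρ⁻¹ (φ (α' ρ⁻¹ (φstar x)))
      rw [h2] at h0
      rw [h0, map_smul]
    have h3 : (d : ℚ) • α' ρ⁻¹ (φstar x) = (d : ℚ) • (c ρ • φstar (α ρ⁻¹ x)) := by
      have h4 := congrArg φstar h1
      have h5 : φstar (φ (α' ρ⁻¹ (φstar x))) = (d : ℚ) • α' ρ⁻¹ (φstar x) := by
        have := congrArg (fun f : A' →ₗ[ℚ] A' => f (α' ρ⁻¹ (φstar x))) hdual
        simpa using this
      rw [h5] at h4
      rw [h4, map_smul, mul_smul]
    exact smul_right_injective _ hd0 h3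
  -- compute on a nonzero vector
  obtain ⟨x, hx⟩ := exists_ne (0 : A)
  have lhs := hc' (σ * τ) x
  have hαmul : α (σ * τ) (φ (α' (σ * τ)⁻¹ (φstar x)))
      = α σ (α τ (φ (α' τ⁻¹ (α' σ⁻¹ (φstar x))))) := by
    have e1 : α' (σ * τ)⁻¹ (φstar x) = α' τ⁻¹ (α' σ⁻¹ (φstar x)) := by
      rw [mul_inv_rev, map_mul]; rfl
    have e2 : ∀ z : A, α (σ * τ) z = α σ (α τ z) := by
      intro z; rw [map_mul]; rfl
    rw [e1, e2]
  rw [hαmul] at lhs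
  rw [key σ x] at lhs
  have lhs2 : α σ (α τ (φ (α' τ⁻¹ ((c σ • φstar (α σ⁻¹ x))))))
      = (c σ * ((d : ℚ) * c τ)) • x := by
    rw [map_smul, map_smul, map_smul, map_smul, hc' τ (α σ⁻¹ x), map_smul, hgrp σ x,
      smul_smul]
  rw [lhs2] at lhs
  have hsc : ((d : ℚ) * c (σ * τ)) = c σ * ((d : ℚ) * c τ) := by
    by_contra hne
    have : (((d : ℚ) * c (σ * τ)) - c σ * ((d : ℚ) * c τ)) • x = 0 := by
      rw [sub_smul, lhs, sub_self]
    rcases smul_eq_zero.mp this with h | h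
    · exact hne (sub_eq_zero.mp h)
    · exact hx h
  have : (d : ℚ) * c (σ * τ) = (d : ℚ) * (c σ * c τ) := by rw [hsc]; ring
  exact mul_left_cancel₀ hd0 this
end

section
/- Let 1 → N → G → Q → 1 be an extension of profinite groups in which Q is a free profinite group. Then the extension splits: there exists a continuous homomorphism s : Q → G with π ∘ s = id_Q. -/
/-! A free profinite group on `S` is projective because a family `S → Q` converging to `1`
lifts along `π : G → Q` to a family converging to `1`; the universal property then turns the lift
into a continuous section. To produce the lift, consider pairs `(K, g)` where `K ≤ ker π` is a
closed normal subgroup and `g` lifts `f` and converges to `1` modulo `K`. The pair `(ker π, any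
lift)` exists because `π` is open; by compactness, chains of such pairs have upper bounds; and a
maximal pair has `K` inside every open normal subgroup, since otherwise `K` could be shrunk to
`K ⊓ V` by moving the lift into `V`. -/

/-- `Q` is a free profinite group on the subset `S`: `S` converges to `1`, and every map
from `S` to a profinite group `G` converging to `1` extends uniquely to a continuous
homomorphism `Q →* G`. -/
def IsFreeProfiniteOn (Q : Type) [Group Q] [TopologicalSpace Q] [IsTopologicalGroup Q]
    [CompactSpace Q] [T2Space Q] [TotallyDisconnectedSpace Q] (S : Set Q) : Prop :=
  (∀ U ∈ nhds (1 : Q), {x ∈ S | x ∉ U}.Finite) ∧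
  ∀ (G : Type) [Group G] [TopologicalSpace G] [IsTopologicalGroup G]
    [CompactSpace G] [T2Space G] [TotallyDisconnectedSpace G]
    (f : S → G), (∀ U ∈ nhds (1 : G), {x : S | f x ∉ U}.Finite) →
      ∃! φ : Q →* G, Continuous φ ∧ ∀ x : S, φ x = f x

open Filter Topology Pointwise

theorem Subgroup.exists_le_of_iInf_le_of_isOpen {G ι : Type*} [Group G] [TopologicalSpace G]
    [CompactSpace G] [Nonempty ι] {K : ι → Subgroup G} (hK : Directed (· ≥ ·) K)
    (hKc : ∀ i, IsClosed (K i : Set G)) {H : Subgroup G} (hH : IsOpen (H : Set G))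
    (hle : ⨅ i, K i ≤ H) : ∃ i, K i ≤ H :=
  exists_subset_nhds_of_isCompact' hK (fun i => (hKc i).isCompact) hKc fun x hx =>
    hH.mem_nhds (hle (by simpa [← Subgroup.coe_iInf] using hx))

theorem Subgroup.mem_of_mem_inf_sup_of_inv_mul_mem {G : Type*} [Group G] {H V K : Subgroup G}
    [K.Normal] (hKV : K ⊓ V ≤ H) {g g' : G} (hg : g ∈ H ⊓ V ⊔ K) (hg' : g' ∈ V)
    (hgg' : g⁻¹ * g' ∈ K) : g' ∈ H := by
  obtain ⟨h, hh, k, hk, rfl⟩ := Subgroup.mem_sup_of_normal_right.mp hg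
  have hK : h⁻¹ * g' ∈ K := by
    simpa [mul_assoc] using K.mul_mem hk hgg'
  have hV : h⁻¹ * g' ∈ V := V.mul_mem (V.inv_mem (Subgroup.mem_inf.mp hh).2) hg'
  simpa using H.mul_mem (Subgroup.mem_inf.mp hh).1 (hKV ⟨hK, hV⟩)

/-- A lift of `f` along `π` that converges to `1` modulo `K`. -/
structure LiftModulo {G Q ι : Type*} [Group G] [TopologicalSpace G] [Group Q]
    (π : G →* Q) (f : ι → Q) where
  K : Subgroup G
  [normal : K.Normal]
  isClosed : IsClosed (K : Set G)
  le_ker : K ≤ π.ker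
  lift : ι → G
  map_lift : ∀ i, π (lift i) = f i
  eventually_mem : ∀ H : Subgroup G, IsOpen (H : Set G) → K ≤ H → ∀ᶠ i in cofinite, lift i ∈ H

namespace LiftModulo

attribute [instance] LiftModulo.normal

variable {G Q ι : Type*} [Group G] [TopologicalSpace G] [Group Q] {π : G →* Q} {f : ι → Q}

instance : Preorder (LiftModulo π f) where
  le a b := b.K ≤ a.K ∧ ∀ i, (a.lift i)⁻¹ * b.lift i ∈ a.K
  le_refl a := ⟨le_rfl, fun i => by simp [one_mem]⟩
  le_trans a b c hab hbc := ⟨hbc.1.trans hab.1, fun i => by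
    simpa [mul_assoc] using a.K.mul_mem (hab.2 i) (hab.1 (hbc.2 i))⟩

theorem nonempty [CompactSpace G] [IsTopologicalGroup G] [TopologicalSpace Q]
    [IsTopologicalGroup Q] [T2Space Q] [LocallyCompactSpace Q] (hπ : Continuous π)
    (hsurj : Function.Surjective π) (hf : Tendsto f cofinite (𝓝 1)) :
    Nonempty (LiftModulo π f) := by
  choose g hg using fun i => hsurj (f i)
  refine ⟨⟨π.ker, isClosed_singleton.preimage hπ, le_rfl, g, hg, fun H hH hkerH => ?_⟩⟩
  have hπH : π '' H ∈ 𝓝 1 := by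
    simpa using (π.isOpenMap_of_sigmaCompact hsurj hπ).image_mem_nhds (hH.mem_nhds H.one_mem)
  filter_upwards [hf hπH] with i ⟨h, hh, hhi⟩
  have : h⁻¹ * g i ∈ π.ker := π.eq_iff.mp (by rw [hg, hhi])
  simpa using H.mul_mem hh (hkerH this)

theorem K_le_of_le {a b : LiftModulo π f} (h : a ≤ b) : b.K ≤ a.K := h.1

theorem lift_mem_coset_of_le {a b : LiftModulo π f} (h : a ≤ b) (i : ι) :
    b.lift i • (b.K : Set G) ⊆ a.lift i • (a.K : Set G) := fun g hg => by
  rw [mem_leftCoset_iff] at hg ⊢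
  simpa [mul_assoc] using a.K.mul_mem (h.2 i) (h.1 hg)

theorem map_eq_of_inv_mul_mem (a : LiftModulo π f) {i : ι} {g : G}
    (hg : (a.lift i)⁻¹ * g ∈ a.K) : π g = f i := by
  rw [← a.map_lift i]
  exact π.eq_iff.mpr (a.le_ker hg)

theorem bddAbove_of_isChain [CompactSpace G] [IsTopologicalGroup G]
    {c : Set (LiftModulo π f)} (hc : IsChain (· ≤ ·) c) (hne : c.Nonempty) : BddAbove c := by
  have : Nonempty c := hne.to_subtype
  have hdir : Directed (· ≤ ·) (Subtype.val : c → LiftModulo π f) := hc.directed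
  have hcoset (i : ι) : (⋂ a : c, a.1.lift i • (a.1.K : Set G)).Nonempty :=
    IsCompact.nonempty_iInter_of_directed_nonempty_isCompact_isClosed _
      (hdir.mono_comp (g := fun a => a.lift i • (a.K : Set G)) _ fun _ _ h =>
        lift_mem_coset_of_le h i)
      (fun a => ⟨a.1.lift i, mem_leftCoset_iff _ |>.mpr (by simp [one_mem])⟩)
      (fun a => (a.1.isClosed.leftCoset _).isCompact) fun a => a.1.isClosed.leftCoset _
  choose F hF using hcoset
  have hF' (a : c) (i : ι) : (a.1.lift i)⁻¹ * F i ∈ a.1.K :=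
    (mem_leftCoset_iff _).mp (Set.mem_iInter.mp (hF i) a)
  obtain ⟨a₀⟩ := ‹Nonempty c›
  have : (⨅ a : c, a.1.K).Normal := Subgroup.normal_iInf_normal fun a => a.1.normal
  let ub : LiftModulo π f :=
    { K := ⨅ a : c, a.1.K
      isClosed := by
        simpa only [Subgroup.coe_iInf] using isClosed_iInter fun a : c => a.1.isClosed
      le_ker := (iInf_le _ a₀).trans a₀.1.le_ker
      lift := F
      map_lift := fun i => a₀.1.map_eq_of_inv_mul_mem (hF' a₀ i)
      eventually_mem := fun H hH hle => by
        obtain ⟨a, ha⟩ := Subgroup.exists_le_of_iInf_le_of_isOpen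
          (hdir.mono_comp (g := LiftModulo.K) _ fun _ _ h => K_le_of_le h)
          (fun a : c => a.1.isClosed) hH hle
        filter_upwards [a.1.eventually_mem H hH ha] with i hi
        simpa using H.mul_mem hi (ha (hF' a i)) }
  exact ⟨ub, fun a ha => ⟨iInf_le (fun a : c => a.1.K) ⟨a, ha⟩, hF' ⟨a, ha⟩⟩⟩

theorem exists_le_K_eq_inf [IsTopologicalGroup G] (m : LiftModulo π f) (V : Subgroup G)
    [V.Normal] (hV : IsOpen (V : Set G)) : ∃ m' : LiftModulo π f, m ≤ m' ∧ m'.K = m.K ⊓ V := by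
  have (i : ι) : ∃ g, (m.lift i)⁻¹ * g ∈ m.K ∧ (m.lift i ∈ V ⊔ m.K → g ∈ V) := by
    by_cases hi : m.lift i ∈ V ⊔ m.K
    · obtain ⟨v, hv, k, hk, hvk⟩ := Subgroup.mem_sup_of_normal_right.mp hi
      exact ⟨v, by simpa [← hvk] using m.K.inv_mem hk, fun _ => hv⟩
    · exact ⟨m.lift i, by simp [one_mem], fun h => absurd h hi⟩
  choose g hgK hgV using this
  refine ⟨⟨m.K ⊓ V, m.isClosed.inter (V.isClosed_of_isOpen hV), inf_le_left.trans m.le_ker, g,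
    fun i => m.map_eq_of_inv_mul_mem (hgK i), fun H hH hle => ?_⟩, ⟨inf_le_left, hgK⟩, rfl⟩
  filter_upwards [m.eventually_mem _ (Subgroup.isOpen_mono le_sup_left
      (show IsOpen ((H ⊓ V : Subgroup G) : Set G) from hH.inter hV)) le_sup_right,
    m.eventually_mem _ (Subgroup.isOpen_mono le_sup_left hV) le_sup_right] with i hHV hV'
  exact Subgroup.mem_of_mem_inf_sup_of_inv_mul_mem hle hHV (hgV i hV') (hgK i)

theorem K_le_of_isMax [IsTopologicalGroup G] {m : LiftModulo π f} (hm : IsMax m)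
    (V : Subgroup G) [V.Normal] (hV : IsOpen (V : Set G)) : m.K ≤ V := by
  obtain ⟨m', hmm', hK⟩ := m.exists_le_K_eq_inf V hV
  exact (K_le_of_le (hm hmm')).trans (hK ▸ inf_le_right)

end LiftModulo

theorem exists_lift_tendsto_one {G Q ι : Type*} [Group G] [TopologicalSpace G]
    [IsTopologicalGroup G] [CompactSpace G] [TotallyDisconnectedSpace G] [Group Q]
    [TopologicalSpace Q] [IsTopologicalGroup Q] [T2Space Q] [LocallyCompactSpace Q]
    {π : G →* Q} (hπ : Continuous π) (hsurj : Function.Surjective π) {f : ι → Q}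
    (hf : Tendsto f cofinite (𝓝 1)) :
    ∃ g : ι → G, (∀ i, π (g i) = f i) ∧ Tendsto g cofinite (𝓝 1) := by
  have := LiftModulo.nonempty hπ hsurj hf
  obtain ⟨m, hm⟩ := zorn_le_nonempty (α := LiftModulo π f) fun _ hc hne =>
    LiftModulo.bddAbove_of_isChain hc hne
  refine ⟨m.lift, m.map_lift, fun U hU => ?_⟩
  obtain ⟨W, hWU, hW, h1W⟩ := mem_nhds_iff.mp hU
  obtain ⟨V, hVW⟩ := ProfiniteGrp.exist_openNormalSubgroup_sub_open_nhds_of_one hW h1W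
  filter_upwards [m.eventually_mem V V.isOpen (LiftModulo.K_le_of_isMax hm V V.isOpen)] with i hi
  exact hWU (hVW hi)

namespace IsFreeProfiniteOn

variable {Q : Type} [Group Q] [TopologicalSpace Q] [IsTopologicalGroup Q] [CompactSpace Q]
  [T2Space Q] [TotallyDisconnectedSpace Q] {S : Set Q}

theorem tendsto_coe (hS : IsFreeProfiniteOn Q S) : Tendsto ((↑) : S → Q) cofinite (𝓝 1) :=
  fun U hU => ((hS.1 U hU).preimage Subtype.val_injective.injOn).subset fun x hx => ⟨x.2, hx⟩

theorem exists_extend (hS : IsFreeProfiniteOn Q S) (G : Type) [Group G] [TopologicalSpace G]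
    [IsTopologicalGroup G] [CompactSpace G] [T2Space G] [TotallyDisconnectedSpace G]
    {f : S → G} (hf : Tendsto f cofinite (𝓝 1)) :
    ∃ φ : Q →* G, Continuous φ ∧ ∀ x : S, φ x = f x :=
  (hS.2 G f fun _ hU => hf hU).exists

theorem hom_ext (hS : IsFreeProfiniteOn Q S) {G : Type} [Group G] [TopologicalSpace G]
    [IsTopologicalGroup G] [CompactSpace G] [T2Space G] [TotallyDisconnectedSpace G]
    {φ ψ : Q →* G} (hφ : Continuous φ) (hψ : Continuous ψ) (h : ∀ x : S, φ x = ψ x) : φ = ψ :=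
  have hφS : Tendsto (φ ∘ (↑) : S → G) cofinite (𝓝 1) :=
    (hφ.tendsto' 1 1 (map_one φ)).comp hS.tendsto_coe
  (hS.2 G _ fun _ hU => hφS hU).unique ⟨hφ, fun _ => rfl⟩ ⟨hψ, fun x => (h x).symm⟩

end IsFreeProfiniteOn

theorem extension_by_free_profinite_splits_general
    (G : Type) [Group G] [TopologicalSpace G] [IsTopologicalGroup G]
    [CompactSpace G] [T2Space G] [TotallyDisconnectedSpace G]
    (Q : Type) [Group Q] [TopologicalSpace Q] [IsTopologicalGroup Q]
    [CompactSpace Q] [T2Space Q] [TotallyDisconnectedSpace Q]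
    (π : G →* Q) (hπcont : Continuous π)
    (hπsurj : Function.Surjective π)
    (hfree : ∃ S : Set Q, IsFreeProfiniteOn Q S) :
    ∃ s : Q →* G, Continuous s ∧ ∀ q : Q, π (s q) = q := by
  obtain ⟨S, hS⟩ := hfree
  obtain ⟨g, hg, hg_tendsto⟩ := exists_lift_tendsto_one hπcont hπsurj hS.tendsto_coe
  obtain ⟨s, hs, hsg⟩ := hS.exists_extend G hg_tendsto
  have hπs : π.comp s = MonoidHom.id Q :=
    hS.hom_ext (hπcont.comp hs) continuous_id fun x => by simp [hsg, hg]
  exact ⟨s, hs, DFunLike.congr_fun hπs⟩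

/-- An extension `1 → N → G → Q → 1` of profinite groups with `Q` free profinite splits:
there is a continuous homomorphism `s : Q → G` with `π ∘ s = id`. -/
theorem extension_by_free_profinite_splits
    (G : Type) [Group G] [TopologicalSpace G] [IsTopologicalGroup G]
    [CompactSpace G] [T2Space G] [TotallyDisconnectedSpace G]
    (Q : Type) [Group Q] [TopologicalSpace Q] [IsTopologicalGroup Q]
    [CompactSpace Q] [T2Space Q] [TotallyDisconnectedSpace Q]
    (N : Subgroup G) (π : G →* Q) (hπcont : Continuous π)
    (hπsurj : Function.Surjective π) (hker : π.ker = N)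
    (hfree : ∃ S : Set Q, IsFreeProfiniteOn Q S) :
    ∃ s : Q →* G, Continuous s ∧ ∀ q : Q, π (s q) = q :=
  extension_by_free_profinite_splits_general G Q π hπcont hπsurj hfree
end

section
/- Let T be a finitely generated ℤ_ℓ-module with a ℤ_ℓ-linear action of a group G, and set V = T ⊗_{ℤ_ℓ} ℚ_ℓ. If the G-invariants of T/ℓⁿT are of order bounded by a constant c independent of n, then V^G = 0. -/
/-!
Clearing denominators, an invariant vector `v` of `V` satisfies `s • v = 1 ⊗ t` with
`ρ g t - t` torsion for every `g`; a non-zero-divisor `r` killing the (finitely generated)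
torsion of `T` makes `r • t` a genuine invariant of `T`. If `ℓ ^ c • r • t ≠ 0`, Krull's
intersection theorem gives `n` with `ℓ ^ c • r • t ∉ ℓ ^ n T`, and then the classes of
`ℓ ^ i • r • t`, `i ≤ c`, are `c + 1` distinct invariants of `T / ℓ ^ n T`, because
`ℓ ^ i x - ℓ ^ j x` is a unit multiple of `ℓ ^ i x`. Hence `(ℓ ^ c * r * s) • v = 0`, so `v = 0`.
-/

open Pointwise
open scoped nonZeroDivisors TensorProduct

section Invariants

variable {R M G : Type*} [CommRing R] [AddCommGroup M] [Module R M] [Group G]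

def quotientInvariants (ρ : Representation R G M) (N : Submodule R M) : Set (M ⧸ N) :=
  {x | ∀ g : G, ∀ t : M, Submodule.Quotient.mk t = x → Submodule.Quotient.mk (ρ g t) = x}

lemma mk_mem_quotientInvariants_smul_top (ρ : Representation R G M) (a : R) {t : M}
    (ht : ∀ g, ρ g t = t) :
    Submodule.Quotient.mk t ∈ quotientInvariants ρ (a • (⊤ : Submodule R M)) := by
  intro g s hs
  rw [Submodule.Quotient.eq, ← Submodule.ideal_span_singleton_smul] at hs ⊢
  simpa [ht g] using Submodule.smul_top_le_comap_smul_top _ (ρ g) hs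

lemma IsLocalRing.pow_smul_sub_pow_smul_mem_iff [IsLocalRing R] {p : R} (hp : ¬ IsUnit p)
    (N : Submodule R M) (x : M) {i j : ℕ} (hij : i < j) :
    p ^ i • x - p ^ j • x ∈ N ↔ p ^ i • x ∈ N := by
  have hu : IsUnit (1 - p ^ (j - i)) :=
    IsLocalRing.isUnit_one_sub_self_of_mem_nonunits _ fun h =>
      hp ((isUnit_pow_iff (Nat.sub_ne_zero_of_lt hij)).mp h)
  have hfac : p ^ i • x - p ^ j • x = (1 - p ^ (j - i)) • p ^ i • x := by
    rw [sub_smul, one_smul, smul_smul, ← pow_add, Nat.sub_add_cancel hij.le]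
  rw [hfac, N.smul_mem_iff_of_isUnit hu]

lemma lt_card_quotientInvariants_of_pow_smul_notMem [IsLocalRing R] (ρ : Representation R G M)
    {p : R} (hp : ¬ IsUnit p) (a : R) [Finite (M ⧸ a • (⊤ : Submodule R M))] {t : M}
    (ht : ∀ g, ρ g t = t) {c : ℕ} (hc : p ^ c • t ∉ a • (⊤ : Submodule R M)) :
    c < Nat.card (quotientInvariants ρ (a • (⊤ : Submodule R M))) := by
  set N := a • (⊤ : Submodule R M)
  have hi : ∀ i ≤ c, p ^ i • t ∉ N := fun i hi h => hc <| by
    simpa [smul_smul, ← pow_add, Nat.sub_add_cancel hi] using N.smul_mem (p ^ (c - i)) h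
  let f : Fin (c + 1) → quotientInvariants ρ N := fun i =>
    ⟨_, mk_mem_quotientInvariants_smul_top ρ a (t := p ^ (i : ℕ) • t)
      fun g => by rw [map_smul, ht]⟩
  have hf : Function.Injective f := by
    intro i j hij
    rw [Subtype.mk_eq_mk, Submodule.Quotient.eq] at hij
    by_contra hne
    rcases Fin.lt_or_lt_of_ne hne with h | h
    · exact hi i (Nat.lt_succ_iff.mp i.isLt)
        ((IsLocalRing.pow_smul_sub_pow_smul_mem_iff hp N t h).mp hij)
    · rw [← neg_mem_iff, neg_sub] at hij
      exact hi j (Nat.lt_succ_iff.mp j.isLt)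
        ((IsLocalRing.pow_smul_sub_pow_smul_mem_iff hp N t h).mp hij)
  simpa using Nat.card_le_card_of_injective f hf

lemma exists_notMem_pow_smul_top [IsNoetherianRing R] [IsLocalRing R] [Module.Finite R M]
    {p : R} (hp : ¬ IsUnit p) {x : M} (hx : x ≠ 0) :
    ∃ n : ℕ, x ∉ p ^ n • (⊤ : Submodule R M) := by
  have krull := Ideal.iInf_pow_smul_eq_bot_of_isLocalRing (M := M) (Ideal.span {p})
    fun h => hp (Ideal.span_singleton_eq_top.mp h)
  by_contra! h
  apply hx
  rw [← Submodule.mem_bot R, ← krull, Submodule.mem_iInf]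
  intro n
  rw [Ideal.span_singleton_pow, Submodule.ideal_span_singleton_smul]
  exact h n

lemma pow_smul_eq_zero_of_card_quotientInvariants_le [IsNoetherianRing R] [IsLocalRing R]
    [Module.Finite R M] (ρ : Representation R G M) {p : R} (hp : ¬ IsUnit p)
    (hfin : ∀ n : ℕ, Finite (M ⧸ p ^ n • (⊤ : Submodule R M))) {c : ℕ}
    (hbound : ∀ n : ℕ, Nat.card (quotientInvariants ρ (p ^ n • ⊤)) ≤ c)
    {t : M} (ht : ∀ g, ρ g t = t) : p ^ c • t = 0 := by
  by_contra h
  obtain ⟨n, hn⟩ := exists_notMem_pow_smul_top hp h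
  have := hfin n
  exact (hbound n).not_gt (lt_card_quotientInvariants_of_pow_smul_notMem ρ hp _ ht hn)

end Invariants

lemma Submodule.exists_mem_nonZeroDivisors_forall_torsion_smul_eq_zero {R M : Type*} [CommRing R]
    [IsNoetherianRing R] [AddCommGroup M] [Module R M] [Module.Finite R M] :
    ∃ r ∈ R⁰, ∀ x ∈ Submodule.torsion R M, r • x = 0 := by
  obtain ⟨r, hr, hr₀⟩ := Submodule.annihilator_top_inter_nonZeroDivisors
    (Submodule.torsion_isTorsion (R := R) (M := M))
  exact ⟨r, hr₀, fun x hx =>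
    congrArg Subtype.val (Submodule.mem_annihilator.mp hr ⟨x, hx⟩ Submodule.mem_top)⟩

lemma IsFractionRing.eq_zero_of_smul_eq_zero {R K V : Type*} [CommRing R] [CommRing K]
    [Algebra R K] [IsFractionRing R K] [AddCommGroup V] [Module R V] [Module K V]
    [IsScalarTower R K V] {r : R} (hr : r ∈ R⁰) {v : V} (h : r • v = 0) : v = 0 := by
  rw [← algebraMap_smul K] at h
  exact ((IsLocalization.map_units K ⟨r, hr⟩).smul_eq_zero).mp h

lemma exists_smul_eq_one_tmul_of_forall_baseChange_eq {R K M G : Type*} [CommRing R]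
    [IsNoetherianRing R] [CommRing K] [Algebra R K] [IsFractionRing R K] [AddCommGroup M]
    [Module R M] [Module.Finite R M] [Group G] (ρ : Representation R G M) {v : K ⊗[R] M}
    (hv : ∀ g, (ρ g).baseChange K v = v) :
    ∃ r ∈ R⁰, ∃ t : M, (∀ g, ρ g t = t) ∧ r • v = 1 ⊗ₜ t := by
  let f := TensorProduct.mk R K M 1
  obtain ⟨⟨t, s⟩, hts⟩ := IsLocalizedModule.surj R⁰ f v
  obtain ⟨r, hr, hr_tors⟩ :=
    Submodule.exists_mem_nonZeroDivisors_forall_torsion_smul_eq_zero (R := R) (M := M)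
  have h_tors : ∀ g, ρ g t - t ∈ Submodule.torsion R M := fun g => by
    refine (IsLocalizedModule.eq_zero_iff R⁰ f).mp ?_
    have : f (ρ g t) = (ρ g).baseChange K (f t) := rfl
    rw [map_sub, this, ← hts, LinearMap.map_smul_of_tower, hv, sub_self]
  refine ⟨r * s, mul_mem hr s.prop, r • t, fun g => ?_, ?_⟩
  · rw [map_smul, ← sub_eq_zero, ← smul_sub, hr_tors _ (h_tors g)]
  · rw [mul_smul, ← Submonoid.smul_def, hts, ← map_smul]
    rfl

lemma PadicInt.not_isUnit_natCast (ℓ : ℕ) [Fact ℓ.Prime] : ¬ IsUnit (ℓ : ℤ_[ℓ]) := by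
  rw [PadicInt.isUnit_iff, PadicInt.norm_p]
  exact inv_ne_one.mpr (by exact_mod_cast (Fact.out : ℓ.Prime).ne_one)

lemma PadicInt.finite_quotient_pow_smul_top (ℓ : ℕ) [Fact ℓ.Prime] (T : Type*) [AddCommGroup T]
    [Module ℤ_[ℓ] T] [Module.Finite ℤ_[ℓ] T] (n : ℕ) :
    Finite (T ⧸ (ℓ : ℤ_[ℓ]) ^ n • (⊤ : Submodule ℤ_[ℓ] T)) := by
  have : Finite (ℤ_[ℓ] ⧸ Ideal.span {(ℓ : ℤ_[ℓ]) ^ n}) := by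
    rw [← PadicInt.ker_toZModPow]
    exact Finite.of_injective _ (RingHom.kerLift_injective (PadicInt.toZModPow n))
  rw [← Submodule.ideal_span_singleton_smul]
  exact Module.finite_of_finite (ℤ_[ℓ] ⧸ Ideal.span {(ℓ : ℤ_[ℓ]) ^ n})

/-- Let `T` be a finitely generated `ℤ_ℓ`-module with a `ℤ_ℓ`-linear action `ρ` of a group
`G`, and `V = ℚ_ℓ ⊗ T`.  If the `G`-invariants of `T/ℓⁿT` have order bounded by a
constant `c` independent of `n`, then `V^G = 0`. -/
theorem bounded_invariants_implies_no_rational_invariants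
    (ℓ : ℕ) [Fact ℓ.Prime]
    (T : Type*) [AddCommGroup T] [Module ℤ_[ℓ] T] [Module.Finite ℤ_[ℓ] T]
    (G : Type*) [Group G] (ρ : Representation ℤ_[ℓ] G T)
    (c : ℕ)
    (hbound : ∀ n : ℕ,
      Nat.card {x : T ⧸ ((ℓ : ℤ_[ℓ]) ^ n • (⊤ : Submodule ℤ_[ℓ] T)) |
        ∀ g : G, ∀ t : T, Submodule.Quotient.mk t = x →
          Submodule.Quotient.mk (ρ g t) = x} ≤ c) :
    ∀ v : TensorProduct ℤ_[ℓ] ℚ_[ℓ] T,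
      (∀ g : G, LinearMap.baseChange ℚ_[ℓ] (ρ g) v = v) → v = 0 := by
  intro v hv
  obtain ⟨r, hr, t, ht, hrv⟩ := exists_smul_eq_one_tmul_of_forall_baseChange_eq ρ hv
  have hℓc : (ℓ : ℤ_[ℓ]) ^ c • t = 0 :=
    pow_smul_eq_zero_of_card_quotientInvariants_le ρ (PadicInt.not_isUnit_natCast ℓ)
      (PadicInt.finite_quotient_pow_smul_top ℓ T) hbound ht
  have hℓ : (ℓ : ℤ_[ℓ]) ^ c ∈ ℤ_[ℓ]⁰ := mem_nonZeroDivisors_of_ne_zero <|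
    pow_ne_zero c (Nat.cast_ne_zero.mpr (Fact.out : ℓ.Prime).ne_zero)
  refine IsFractionRing.eq_zero_of_smul_eq_zero (K := ℚ_[ℓ]) (mul_mem hℓ hr) ?_
  rw [mul_smul, hrv, ← TensorProduct.tmul_smul, hℓc, TensorProduct.tmul_zero]
end

section
/- Let ρ : G → GL(V) be a representation of a group G on a finite-dimensional vector space V over an algebraically closed field, such that the restriction of ρ to a normal subgroup H remains irreducible. If ρ' : G → GL(V) is another representation with ρ'|_H ≅ ρ|_H, then there exists a unique character χ : G/H → field* such that ρ' ≅ ρ ⊗ χ. -/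
section Aux

variable {F : Type*} [Field F] {V : Type*} [AddCommGroup V] [Module F V]

private lemma smul_cancel_aux {a b : F} {w : V} (hw : w ≠ 0) (h : a • w = b • w) : a = b := by
  by_contra hab
  have : (a - b) • w = 0 := by rw [sub_smul, h, sub_self]
  rcases smul_eq_zero.1 this with h1 | h1
  · exact hab (sub_eq_zero.1 h1)
  · exact hw h1

end Aux

private lemma schur_aux
    (F : Type*) [Field F] [IsAlgClosed F]
    (V : Type*) [AddCommGroup V] [Module F V] [FiniteDimensional F V] [Nontrivial V]
    (G : Type*) [Group G] (H : Subgroup G)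
    (ρ : Representation F G V)
    (hirr : ∀ W : Submodule F V, (∀ h ∈ H, ∀ w ∈ W, ρ h w ∈ W) → W = ⊥ ∨ W = ⊤)
    (B : V →ₗ[F] V) (hB : ∀ h ∈ H, ∀ v : V, B (ρ h v) = ρ h (B v)) :
    ∃ c : F, ∀ v : V, B v = c • v := by
  obtain ⟨c, hc⟩ := Module.End.exists_eigenvalue (B : Module.End F V)
  refine ⟨c, ?_⟩
  have hinv : ∀ h ∈ H, ∀ w ∈ Module.End.eigenspace B c, ρ h w ∈ Module.End.eigenspace B c := by
    intro h hh w hw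
    rw [Module.End.mem_eigenspace_iff] at hw ⊢
    rw [hB h hh, hw, map_smul]
  rcases hirr _ hinv with hbot | htop
  · exact absurd hbot hc
  · intro v
    have : v ∈ Module.End.eigenspace B c := htop ▸ Submodule.mem_top
    exact Module.End.mem_eigenspace_iff.1 this

/-- Let `ρ : G → GL(V)` be a representation on a finite-dimensional vector space over an
algebraically closed field whose restriction to a normal subgroup `H` is irreducible.  If
`ρ'` is another representation with `ρ'|_H ≅ ρ|_H`, then there is a unique character
`χ : G → Fˣ` trivial on `H` with `ρ' ≅ ρ ⊗ χ`. -/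
theorem twist_by_unique_character_of_irreducible_restriction
    (F : Type*) [Field F] [IsAlgClosed F]
    (V : Type*) [AddCommGroup V] [Module F V] [FiniteDimensional F V] [Nontrivial V]
    (G : Type*) [Group G] (H : Subgroup G) [H.Normal]
    (ρ ρ' : Representation F G V)
    (hirr : ∀ W : Submodule F V, (∀ h ∈ H, ∀ w ∈ W, ρ h w ∈ W) → W = ⊥ ∨ W = ⊤)
    (hiso : ∃ S : V ≃ₗ[F] V, ∀ h ∈ H, ∀ v : V, S (ρ h v) = ρ' h (S v)) :
    ∃! χ : G →* Fˣ, (∀ h ∈ H, χ h = 1) ∧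
      ∃ T : V ≃ₗ[F] V, ∀ g : G, ∀ v : V, T ((χ g : F) • ρ g v) = ρ' g (T v) := by
  obtain ⟨S, hS⟩ := hiso
  obtain ⟨v₀, hv₀⟩ := exists_ne (0 : V)
  -- the intertwiner-twist for each g
  have hBcomm : ∀ g : G, ∀ h ∈ H, ∀ v : V,
      (S.symm.toLinearMap ∘ₗ (ρ' g) ∘ₗ S.toLinearMap ∘ₗ (ρ g⁻¹)) (ρ h v)
        = ρ h ((S.symm.toLinearMap ∘ₗ (ρ' g) ∘ₗ S.toLinearMap ∘ₗ (ρ g⁻¹)) v) := by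
    intro g h hh v
    have hh' : g * h * g⁻¹ ∈ H := Subgroup.Normal.conj_mem ‹H.Normal› h hh g
    simp only [LinearMap.comp_apply, LinearEquiv.coe_coe]
    have e1 : ρ g⁻¹ (ρ h v) = ρ (g⁻¹ * h) v := by
      rw [map_mul]; rfl
    have e2 : (ρ' g) (S (ρ (g⁻¹ * h) v)) = (ρ' g) (S (ρ (g⁻¹ * h * g) (ρ g⁻¹ v))) := by
      congr 1
      rw [← Module.End.mul_apply (ρ (g⁻¹ * h * g)) (ρ g⁻¹), ← map_mul]
      group
    have hconj : g⁻¹ * h * g ∈ H := by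
      have := Subgroup.Normal.conj_mem ‹H.Normal› h hh g⁻¹
      simpa using this
    rw [e1, e2, hS _ hconj]
    have e3 : (ρ' g) (ρ' (g⁻¹ * h * g) (S (ρ g⁻¹ v))) = ρ' (h * g) (S (ρ g⁻¹ v)) := by
      rw [← Module.End.mul_apply, ← map_mul]
      group
    rw [e3]
    have e4 : ρ' (h * g) = (ρ' h) * (ρ' g) := by rw [map_mul]
    rw [e4, Module.End.mul_apply]
    have e5 : ∀ w : V, S.symm (ρ' h w) = ρ h (S.symm w) := by
      intro w
      apply S.injective
      rw [hS _ hh, S.apply_symm_apply, S.apply_symm_apply]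
    rw [e5]
  -- Schur gives scalars
  have hsc : ∀ g : G, ∃ c : F, ∀ v : V, S.symm ((ρ' g) (S (ρ g⁻¹ v))) = c • v := by
    intro g
    obtain ⟨c, hc⟩ := schur_aux F V G H ρ hirr
      (S.symm.toLinearMap ∘ₗ (ρ' g) ∘ₗ S.toLinearMap ∘ₗ (ρ g⁻¹)) (hBcomm g)
    exact ⟨c, fun v => hc v⟩
  choose c hc using hsc
  -- key identity
  have key : ∀ g : G, ∀ v : V, (ρ' g) (S v) = c g • S (ρ g v) := by
    intro g v
    have := hc g (ρ g v)
    have einv : ρ g⁻¹ (ρ g v) = v := by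
      rw [← Module.End.mul_apply, ← map_mul, inv_mul_cancel, map_one, Module.End.one_apply]
    rw [einv] at this
    have := congrArg S this
    rw [S.apply_symm_apply] at this
    rw [this, map_smul]
  have hSnz : ∀ g : G, ∀ v : V, v ≠ 0 → S (ρ g v) ≠ 0 := by
    intro g v hv h0
    apply hv
    have : ρ g v = 0 := by simpa using congrArg S.symm h0
    have := congrArg (ρ g⁻¹) this
    rwa [← Module.End.mul_apply, ← map_mul, inv_mul_cancel, map_one, Module.End.one_apply,
      map_zero] at this
  have hcne : ∀ g : G, c g ≠ 0 := by
    intro g h0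
    have := key g v₀
    rw [h0, zero_smul] at this
    have : S v₀ = 0 := by
      have h2 := congrArg (ρ' g⁻¹) this
      rwa [← Module.End.mul_apply, ← map_mul, inv_mul_cancel, map_one, Module.End.one_apply,
        map_zero] at h2
    exact hv₀ (by simpa using congrArg S.symm this)
  have hmul : ∀ g₁ g₂ : G, c (g₁ * g₂) = c g₁ * c g₂ := by
    intro g₁ g₂
    have e1 : (ρ' (g₁ * g₂)) (S v₀) = c (g₁ * g₂) • S (ρ (g₁ * g₂) v₀) := key _ v₀
    have e2 : (ρ' (g₁ * g₂)) (S v₀) = (c g₁ * c g₂) • S (ρ (g₁ * g₂) v₀) := by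
      rw [map_mul, Module.End.mul_apply, key g₂ v₀, map_smul, key g₁ (ρ g₂ v₀),
        ← Module.End.mul_apply, ← map_mul, smul_smul, mul_comm (c g₂)]
    exact smul_cancel_aux (hSnz _ _ hv₀) (e1.symm.trans e2)
  have hone : c 1 = 1 := by
    have e1 := key 1 v₀
    simp only [map_one, Module.End.one_apply] at e1
    have hw : S v₀ ≠ 0 := by simpa using hSnz 1 v₀ hv₀
    exact (smul_cancel_aux hw (by rw [one_smul]; exact e1)).symm
  refine ⟨{ toFun := fun g => Units.mk0 (c g) (hcne g),
            map_one' := by ext; simp [hone],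
            map_mul' := fun g₁ g₂ => by ext; simp [hmul] }, ⟨?_, ⟨S, ?_⟩⟩, ?_⟩
  · -- trivial on H
    intro h hh
    ext
    simp only [MonoidHom.coe_mk, OneHom.coe_mk, Units.val_mk0, Units.val_one]
    have e1 : (ρ' h) (S v₀) = c h • S (ρ h v₀) := key h v₀
    rw [hS h hh] at e1
    have hw : (ρ' h) (S v₀) ≠ 0 := hS h hh v₀ ▸ hSnz h v₀ hv₀
    refine smul_cancel_aux hw ?_
    rw [one_smul]
    exact e1.symm
  · -- intertwining
    intro g v
    simp only [MonoidHom.coe_mk, OneHom.coe_mk, Units.val_mk0]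
    rw [map_smul, ← key g v]
  · -- uniqueness
    intro χ' ⟨hH', T', hT'⟩
    -- T' intertwines ρ and ρ' on H
    have hT'H : ∀ h ∈ H, ∀ v : V, T' (ρ h v) = ρ' h (T' v) := by
      intro h hh v
      have := hT' h v
      rw [hH' h hh] at this
      simpa using this
    have hBc : ∀ h ∈ H, ∀ v : V,
        (S.symm.toLinearMap ∘ₗ T'.toLinearMap) (ρ h v)
          = ρ h ((S.symm.toLinearMap ∘ₗ T'.toLinearMap) v) := by
      intro h hh v
      simp only [LinearMap.comp_apply, LinearEquiv.coe_coe]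
      rw [hT'H h hh]
      apply S.injective
      rw [S.apply_symm_apply, hS h hh, S.apply_symm_apply]
    obtain ⟨d, hd⟩ := schur_aux F V G H ρ hirr (S.symm.toLinearMap ∘ₗ T'.toLinearMap) hBc
    have hd' : ∀ v : V, T' v = d • S v := by
      intro v
      have := hd v
      simp only [LinearMap.comp_apply, LinearEquiv.coe_coe] at this
      have := congrArg S this
      rwa [S.apply_symm_apply, map_smul] at this
    have hdne : d ≠ 0 := by
      intro h0
      have := hd' v₀
      rw [h0, zero_smul] at this
      exact hv₀ (by simpa using congrArg T'.symm this)
    ext g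
    -- compare scalars
    have e1 : ρ' g (T' v₀) = (χ' g : F) • T' (ρ g v₀) := by
      rw [← hT' g v₀, map_smul]
    rw [hd' v₀, hd' (ρ g v₀), map_smul, key g v₀, smul_comm, smul_smul, smul_smul] at e1
    have h2 := smul_cancel_aux (hSnz g v₀ hv₀) e1
    have hval : (χ' g : F) = c g := (mul_right_cancel₀ hdne h2).symm
    simp [Units.ext_iff, hval]
end
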